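/- arXiv:2406.13485 — 2 statements merged into one kernel-verified Lean document; each statement's English description precedes it below -/
import Mathlib

section
/- Assume the cofinite Δ⁰₂-Ramsey theorem: for every eventually constant g : [ℕ]^{<ω} → {0,1} there exists an infinite X ⊆ ℕ such that ḡ is constant on the collection of cofinite subsets of X. Then the three-element antichain is Δ⁰₂-bqo: for every eventually constant f : [ℕ]^{<ω} → {0,1,2} there exists an infinite X ⊆ ℕ with f̄(X) = f̄(X⁻), where X⁻ = X \ {min X}. -/
/-!
Colour an infinite `Z ⊆ ℕ` by whether `f̄(Z⁻) - f̄(Z) = 1` in `Fin 3`. This colouring is the limit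
of an eventually constant colouring of finite sets, so the cofinite Ramsey theorem gives an
infinite `X` on whose cofinite subsets it is constant. If no cofinite `Y ⊆ X` had
`f̄(Y⁻) = f̄(Y)`, then `f̄(Y⁻) - f̄(Y)` would be one and the same `δ ≠ 0` for all of them, and
removing any single element of `Y` would also shift `f̄` by `δ`. Removing one element at a time
above ever longer initial segments, on which `f` already agrees with `f̄`, yields an infinite `Z`
along which `f` keeps moving by `δ`, so `f` is not eventually constant on `Z`.
-/

/-- `seg X n` is the set of the `n` smallest elements of `X`. -/
noncomputable def seg (X : Set ℕ) (n : ℕ) : Finset ℕ :=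
  (Finset.range n).image (Nat.nth (· ∈ X))

/-- `f` is eventually constant. -/
def EvConst {Q : Type*} (f : Finset ℕ → Q) : Prop :=
  ∀ X : Set ℕ, X.Infinite → ∃ N, ∀ n > N, f (seg X n) = f (seg X N)

/-- `fbar` is the limit function of `f`. -/
def IsLimit {Q : Type*} (f : Finset ℕ → Q) (fbar : Set ℕ → Q) : Prop :=
  ∀ X : Set ℕ, X.Infinite → ∃ N, ∀ n ≥ N, f (seg X n) = fbar X

/-- `s` is a proper initial segment of `t`. -/
def PInitSeg (s t : Finset ℕ) : Prop :=
  s ⊆ t ∧ s.card < t.card ∧ ∀ x ∈ s, ∀ y ∈ t, y ∉ s → x < y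

/-- `X⁻ = X \ {min X}`. -/
def dropMin (X : Set ℕ) : Set ℕ := X \ {sInf X}

/-- `X^{-i}`: `X` without its `i` smallest elements. -/
def dropIter (i : ℕ) (X : Set ℕ) : Set ℕ := dropMin^[i] X

/-- `Z/s`: elements of `Z` above all elements of `s`. -/
def after (Z : Set ℕ) (s : Finset ℕ) : Set ℕ := {n ∈ Z | ∀ m ∈ s, m < n}

/-- `Y` is a cofinite subset of `X`. -/
def Cofin (Y X : Set ℕ) : Prop := Y ⊆ X ∧ (X \ Y).Finite

open Set

def IsInitSeg (t : Finset ℕ) (Y : Set ℕ) : Prop :=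
  ↑t ⊆ Y ∧ ∀ a ∈ t, ∀ z ∈ Y, z ∉ t → a < z

namespace IsInitSeg

variable {s t : Finset ℕ} {Y : Set ℕ}

theorem refl (t : Finset ℕ) : IsInitSeg t t :=
  ⟨subset_rfl, fun _ _ _ hz hzt => absurd hz hzt⟩

theorem trans (hst : IsInitSeg s t) (htY : IsInitSeg t Y) : IsInitSeg s Y := by
  refine ⟨hst.1.trans htY.1, fun a ha z hz hzs => ?_⟩
  by_cases hzt : z ∈ t
  · exact hst.2 a ha z hzt hzs
  · exact htY.2 a (hst.1 ha) z hz hzt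

theorem of_card_le (hs : IsInitSeg s Y) (ht : IsInitSeg t Y) (hcard : s.card ≤ t.card) :
    IsInitSeg s t := by
  have hsub : s ⊆ t := by
    intro a has
    by_contra hat
    have hts : t ⊂ s := by
      refine Finset.ssubset_iff_subset_ne.2 ⟨fun b hbt => ?_, fun h => hat (h ▸ has)⟩
      by_contra hbs
      exact lt_asymm (hs.2 a has b (ht.1 hbt) hbs) (ht.2 b hbt a (hs.1 has) hat)
    exact (Finset.card_lt_card hts).not_ge hcard
  exact ⟨Finset.coe_subset.2 hsub, fun a ha z hz hzs => hs.2 a ha z (ht.1 hz) hzs⟩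

theorem diff_singleton (ht : IsInitSeg t Y) {y : ℕ} (hy : y ∉ t) : IsInitSeg t (Y \ {y}) :=
  ⟨fun _ ha => ⟨ht.1 ha, fun h => hy (mem_singleton_iff.1 h ▸ ha)⟩,
    fun a ha z hz hzt => ht.2 a ha z hz.1 hzt⟩

end IsInitSeg

section Seg

variable {Y : Set ℕ}

theorem mem_seg {n a : ℕ} : a ∈ seg Y n ↔ ∃ i < n, Nat.nth (· ∈ Y) i = a := by
  simp [seg]

theorem card_seg (hY : Y.Infinite) (n : ℕ) : (seg Y n).card = n := by
  rw [seg, Finset.card_image_of_injective _ (Nat.nth_injective (p := (· ∈ Y)) hY),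
    Finset.card_range]

theorem isInitSeg_seg (hY : Y.Infinite) (n : ℕ) : IsInitSeg (seg Y n) Y := by
  classical
  refine ⟨fun a ha => ?_, fun a ha z hz hzn => ?_⟩
  · obtain ⟨i, -, rfl⟩ := mem_seg.1 ha
    exact Nat.nth_mem_of_infinite hY i
  · obtain ⟨i, hi, rfl⟩ := mem_seg.1 ha
    obtain ⟨j, rfl⟩ : ∃ j, Nat.nth (· ∈ Y) j = z := ⟨_, Nat.nth_count hz⟩
    have hnj : n ≤ j := not_lt.1 fun hj => hzn (mem_seg.2 ⟨j, hj, rfl⟩)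
    exact Nat.nth_strictMono hY (by omega)

theorem IsInitSeg.seg_card_eq {t : Finset ℕ} (ht : IsInitSeg t Y) (hY : Y.Infinite) :
    seg Y t.card = t :=
  Finset.eq_of_subset_of_card_le
    (Finset.coe_subset.1 ((isInitSeg_seg hY _).of_card_le ht (card_seg hY _).le).1)
    (card_seg hY _).ge

theorem sInf_mem_seg (n : ℕ) : sInf Y ∈ seg Y (n + 1) :=
  mem_seg.2 ⟨0, n.succ_pos, Nat.nth_zero⟩

theorem sInf_coe_seg (hY : Y.Infinite) (n : ℕ) : sInf (seg Y (n + 1) : Set ℕ) = sInf Y :=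
  IsLeast.csInf_eq ⟨sInf_mem_seg n, fun _ hb => Nat.sInf_le ((isInitSeg_seg hY _).1 hb)⟩

theorem seg_dropMin (hY : Y.Infinite) (n : ℕ) :
    seg (dropMin Y) n = (seg Y (n + 1)).erase (sInf Y) := by
  have hinit : IsInitSeg ((seg Y (n + 1)).erase (sInf Y)) (dropMin Y) := by
    refine ⟨fun a ha => ?_, fun a ha z hz hzn => ?_⟩
    · rw [Finset.coe_erase] at ha
      exact ⟨(isInitSeg_seg hY _).1 ha.1, ha.2⟩
    · exact (isInitSeg_seg hY _).2 a (Finset.mem_of_mem_erase ha) z hz.1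
        fun h => hzn (Finset.mem_erase.2 ⟨hz.2, h⟩)
  have hcard : ((seg Y (n + 1)).erase (sInf Y)).card = n := by
    rw [Finset.card_erase_of_mem (sInf_mem_seg n), card_seg hY, Nat.add_sub_cancel]
  simpa [hcard] using hinit.seg_card_eq (hY.sdiff (finite_singleton _))

end Seg

theorem dropMin_diff_singleton {Y : Set ℕ} {y : ℕ} (hy : y ∈ Y) (hne : y ≠ sInf Y) :
    dropMin (Y \ {y}) = dropMin Y \ {y} := by
  have hinf : sInf (Y \ {y}) = sInf Y :=
    IsLeast.csInf_eq ⟨⟨Nat.sInf_mem ⟨y, hy⟩, hne.symm⟩, fun _ hb => Nat.sInf_le hb.1⟩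
  rw [dropMin, dropMin, hinf, sdiff_sdiff_comm]

theorem sInf_lt_sInf_dropMin {Y : Set ℕ} {y : ℕ} (hy : y ∈ dropMin Y) :
    sInf Y < sInf (dropMin Y) :=
  have h : sInf (dropMin Y) ∈ dropMin Y := Nat.sInf_mem ⟨y, hy⟩
  lt_of_le_of_ne (Nat.sInf_le h.1) (Ne.symm h.2)

namespace Cofin

variable {X Y : Set ℕ}

theorem refl (X : Set ℕ) : Cofin X X := ⟨subset_rfl, by simp⟩

theorem infinite (h : Cofin Y X) (hX : X.Infinite) : Y.Infinite :=
  (hX.sdiff h.2).mono (by rw [sdiff_sdiff_right_self]; exact inter_subset_right)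

theorem diff_singleton (h : Cofin Y X) (y : ℕ) : Cofin (Y \ {y}) X :=
  ⟨sdiff_subset.trans h.1, (h.2.union (finite_singleton y)).subset fun x hx => by
    by_cases hxY : x ∈ Y
    · exact Or.inr (by_contra fun hxy => hx.2 ⟨hxY, hxy⟩)
    · exact Or.inl ⟨hx.1, hxY⟩⟩

end Cofin

namespace IsLimit

variable {Q : Type*} {f : Finset ℕ → Q} {fbar : Set ℕ → Q}

theorem evConst (h : IsLimit f fbar) : EvConst f := fun Z hZ => by
  obtain ⟨N, hN⟩ := h Z hZ
  exact ⟨N, fun n hn => (hN n hn.le).trans (hN N le_rfl).symm⟩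

theorem comp_dropMin {R : Type*} (h : IsLimit f fbar) (c : Q → Q → R) :
    IsLimit (fun s => c (f s) (f (s.erase (sInf (s : Set ℕ)))))
      (fun Z => c (fbar Z) (fbar (dropMin Z))) := by
  intro Z hZ
  obtain ⟨N₁, h₁⟩ := h Z hZ
  obtain ⟨N₂, h₂⟩ := h (dropMin Z) (hZ.sdiff (finite_singleton _))
  refine ⟨max N₁ (N₂ + 1), fun n hn => ?_⟩
  obtain ⟨m, rfl⟩ : ∃ m, n = m + 1 := ⟨n - 1, by omega⟩
  dsimp only
  rw [sInf_coe_seg hZ, ← seg_dropMin hZ, h₁ _ (by omega), h₂ _ (by omega)]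

end IsLimit

theorem exists_seg_eq_of_isInitSeg_succ (T : ℕ → Finset ℕ) (hT : ∀ k, IsInitSeg (T k) (T (k + 1)))
    (hcard : StrictMono fun k => (T k).card) :
    ∃ Z : Set ℕ, Z.Infinite ∧ ∀ k, seg Z (T k).card = T k := by
  have hmono : ∀ j k, j ≤ k → IsInitSeg (T j) (T k) := by
    intro j k hjk
    induction hjk with
    | refl => exact IsInitSeg.refl _
    | step _ ih => exact ih.trans (hT _)
  set Z : Set ℕ := ⋃ m, (T m : Set ℕ)
  have hZ : ∀ k, IsInitSeg (T k) Z := fun k =>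
    ⟨subset_iUnion (fun m => (T m : Set ℕ)) k, fun a ha z hz hzn => by
      obtain ⟨m, hm⟩ := mem_iUnion.1 hz
      rcases le_total m k with hmk | hkm
      · exact absurd ((hmono m k hmk).1 hm) hzn
      · exact (hmono k m hkm).2 a ha z hm hzn⟩
  have hinf : Z.Infinite := fun hfin => by
    have hle := ncard_le_ncard (hZ (Z.ncard + 1)).1 hfin
    rw [ncard_coe_finset] at hle
    have := hcard.id_le (Z.ncard + 1)
    simp only [id] at this
    omega
  exact ⟨Z, hinf, fun k => (hZ k).seg_card_eq hinf⟩

section ConstantShift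

variable {Q : Type*} [AddCancelMonoid Q] {f : Finset ℕ → Q} {fbar : Set ℕ → Q} {X : Set ℕ}
  {δ : Q}

theorem limit_diff_singleton_eq_add (H : ∀ Y, Cofin Y X → fbar (dropMin Y) = fbar Y + δ)
    {Y : Set ℕ} (hY : Cofin Y X) {y : ℕ} (hy : y ∈ Y) : fbar (Y \ {y}) = fbar Y + δ := by
  -- Induct on `y - min Y`: for `y ≠ min Y`, removing `y` commutes with removing the minimum.
  induction hd : y - sInf Y using Nat.strong_induction_on generalizing Y with
  | _ d ih =>
  rcases eq_or_ne y (sInf Y) with rfl | hne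
  · exact H Y hY
  have hy' : y ∈ dropMin Y := ⟨hy, hne⟩
  have hlt : y - sInf (dropMin Y) < d := by
    have := sInf_lt_sInf_dropMin hy'
    have := Nat.sInf_le hy'
    omega
  apply add_right_cancel (b := δ)
  calc fbar (Y \ {y}) + δ = fbar (dropMin (Y \ {y})) := (H _ (hY.diff_singleton y)).symm
    _ = fbar (dropMin Y \ {y}) := by rw [dropMin_diff_singleton hy hne]
    _ = fbar (dropMin Y) + δ := ih _ hlt (hY.diff_singleton _) hy' rfl
    _ = fbar Y + δ + δ := by rw [H Y hY]

theorem exists_isInitSeg_extension (hL : IsLimit f fbar) (hX : X.Infinite)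
    (H : ∀ Y, Cofin Y X → fbar (dropMin Y) = fbar Y + δ)
    {t : Finset ℕ} {Y : Set ℕ} (hY : Cofin Y X) (ht : IsInitSeg t Y) :
    ∃ (t' : Finset ℕ) (Y' : Set ℕ), Cofin Y' X ∧ IsInitSeg t' Y' ∧ fbar Y' = fbar Y + δ ∧
      f t' = fbar Y' ∧ IsInitSeg t t' ∧ t.card < t'.card := by
  obtain ⟨y, hyY, hyt⟩ := ((hY.infinite hX).sdiff t.finite_toSet).nonempty
  have hY' := hY.diff_singleton y
  have hY'inf := hY'.infinite hX
  obtain ⟨N, hN⟩ := hL _ hY'inf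
  have hcard : t.card < (seg (Y \ {y}) (max N (t.card + 1))).card := by
    rw [card_seg hY'inf]
    omega
  exact ⟨_, _, hY', isInitSeg_seg hY'inf _, limit_diff_singleton_eq_add H hY hyY,
    hN _ (le_max_left _ _), (ht.diff_singleton hyt).of_card_le (isInitSeg_seg hY'inf _) hcard.le,
    hcard⟩

theorem exists_seq_isInitSeg_limit_shift (hL : IsLimit f fbar) (hX : X.Infinite)
    (H : ∀ Y, Cofin Y X → fbar (dropMin Y) = fbar Y + δ) :
    ∃ T : ℕ → Finset ℕ, (∀ k, IsInitSeg (T k) (T (k + 1))) ∧ (StrictMono fun k => (T k).card) ∧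
      ∀ k, f (T (k + 1)) = fbar X + (k + 1) • δ := by
  choose! next nextSet hcofin hinit hval hf hext hcard using
    fun t Y => exists_isInitSeg_extension (t := t) (Y := Y) hL hX H
  let u : ℕ → Finset ℕ × Set ℕ := fun k => (fun p => (next p.1 p.2, nextSet p.1 p.2))^[k] (∅, X)
  have hu_succ (k : ℕ) : u (k + 1) = (next (u k).1 (u k).2, nextSet (u k).1 (u k).2) :=
    Function.iterate_succ_apply' _ _ _
  have hu (k : ℕ) :
      Cofin (u k).2 X ∧ IsInitSeg (u k).1 (u k).2 ∧ fbar (u k).2 = fbar X + k • δ := by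
    induction k with
    | zero => exact ⟨Cofin.refl X, by simp [u, IsInitSeg], by simp [u]⟩
    | succ k ih =>
      rw [hu_succ]
      exact ⟨hcofin _ _ ih.1 ih.2.1, hinit _ _ ih.1 ih.2.1,
        by rw [hval _ _ ih.1 ih.2.1, ih.2.2, succ_nsmul, add_assoc]⟩
  refine ⟨fun k => (u k).1, fun k => ?_, strictMono_nat_of_lt_succ fun k => ?_, fun k => ?_⟩
  · simp only [hu_succ]
    exact hext _ _ (hu k).1 (hu k).2.1
  · simp only [hu_succ]
    exact hcard _ _ (hu k).1 (hu k).2.1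
  · have h := (hu (k + 1)).2.2
    simp only [hu_succ] at h ⊢
    rw [hf _ _ (hu k).1 (hu k).2.1, h]

theorem eq_zero_of_forall_cofin_dropMin_eq_add (hEC : EvConst f) (hL : IsLimit f fbar)
    (hX : X.Infinite) (H : ∀ Y, Cofin Y X → fbar (dropMin Y) = fbar Y + δ) : δ = 0 := by
  obtain ⟨T, hT, hcard, hfT⟩ := exists_seq_isInitSeg_limit_shift hL hX H
  obtain ⟨Z, hZ, hseg⟩ := exists_seg_eq_of_isInitSeg_succ T hT hcard
  obtain ⟨N, hN⟩ := hEC Z hZ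
  have hstable (k : ℕ) (hk : N < k) : f (T k) = f (seg Z N) := by
    rw [← hseg k]
    exact hN _ (lt_of_lt_of_le hk (hcard.id_le k))
  refine left_eq_add.1 (calc
    fbar X + (N + 1) • δ = f (T (N + 1)) := (hfT N).symm
    _ = f (T (N + 2)) := by rw [hstable _ (by omega), hstable _ (by omega)]
    _ = fbar X + (N + 1) • δ + δ := by rw [hfT, succ_nsmul, add_assoc])

end ConstantShift

theorem Fin.three_eq_of_ne_zero {d e : Fin 3} (hd : d ≠ 0) (he : e ≠ 0) (h : d = 1 ↔ e = 1) :
    d = e := by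
  revert d e
  decide

theorem stmt6
    (ramsey : ∀ (g : Finset ℕ → Fin 2) (gbar : Set ℕ → Fin 2),
      EvConst g → IsLimit g gbar →
      ∃ X : Set ℕ, X.Infinite ∧
        ∀ Y₁ Y₂ : Set ℕ, Cofin Y₁ X → Cofin Y₂ X → gbar Y₁ = gbar Y₂) :
    ∀ (f : Finset ℕ → Fin 3) (fbar : Set ℕ → Fin 3),
      EvConst f → IsLimit f fbar →
      ∃ X : Set ℕ, X.Infinite ∧ fbar X = fbar (dropMin X) := by
  intro f fbar hEC hL
  have hgL := hL.comp_dropMin fun a b => if b - a = 1 then (1 : Fin 2) else 0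
  obtain ⟨X, hX, hhom⟩ := ramsey _ _ hgL.evConst hgL
  by_contra! hne
  have H : ∀ Y, Cofin Y X → fbar (dropMin Y) = fbar Y + (fbar (dropMin X) - fbar X) := by
    intro Y hY
    have hiff : fbar (dropMin Y) - fbar Y = 1 ↔ fbar (dropMin X) - fbar X = 1 := by
      have h := hhom Y X hY (Cofin.refl X)
      split_ifs at h <;> simp_all
    rw [← Fin.three_eq_of_ne_zero (sub_ne_zero.2 (hne Y (hY.infinite hX)).symm)
      (sub_ne_zero.2 (hne X hX).symm) hiff, add_sub_cancel]
  exact hne X hX (sub_eq_zero.1 (eq_zero_of_forall_cofin_dropMin_eq_add hEC hL hX H)).symm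
end

section
/- Suppose f : [ℕ]^{<ω} → {0,1} is eventually constant with limit f̄, and suppose that f̄(X) ≠ f̄(X⁻) holds for every infinite X ⊆ ℕ (where X⁻ = X \ {min X}). Then a contradiction follows. Concretely: choose (by eventual constancy) a finite s ⊆ ℕ with f(s) = f(t) for all finite t ⊃ s having s as proper initial segment; let j = |s|, V = s ∪ (ℕ/s), W = s ∪ (ℕ/s)⁻. Then f̄(V) = f̄(W), yet the hypothesis forces f̄(V^{−j}) and f̄(W^{−j}) to differ in a way incompatible with V^{−j} = ℕ/s and W^{−j} = (ℕ/s)⁻, yielding f̄(ℕ/s) = 1 − f̄(ℕ/s), a contradiction. Formally: there is no eventually constant f : [ℕ]^{<ω} → {0,1} whose limit f̄ satisfies f̄(X) ≠ f̄(X⁻) for all infinite X. -/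
/-!
By eventual constancy some finite `s` stabilises `f`: `f t = f s` whenever `s ⊏ t`. Hence
`f̄(s ∪ Y) = f(s)` for every infinite `Y` above `s`, in particular for `Y = ℕ/s` and for
`Y = (ℕ/s)⁻`. If `f̄` alternated, `f̄(X^{-i})` would be determined by `f̄(X)` and `i`; removing the
`|s|` elements of `s` from both sets then gives `f̄(ℕ/s) = f̄((ℕ/s)⁻)`, contradicting alternation.
An `s` that stabilises `f` exists because otherwise a chain `s₀ ⊏ s₁ ⊏ ⋯` on which `f` keeps
changing has a union along which `f` is not eventually constant.
-/

def IsInitialIn (s : Finset ℕ) (X : Set ℕ) : Prop :=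
  ↑s ⊆ X ∧ ∀ x ∈ s, ∀ y ∈ X, y ∉ s → x < y

section seg

variable {X : Set ℕ}

lemma card_seg_s12 (hX : X.Infinite) (n : ℕ) : (seg X n).card = n := by
  rw [seg, Finset.card_image_of_injective _ (Nat.nth_injective (p := (· ∈ X)) hX),
    Finset.card_range]

lemma seg_mono (X : Set ℕ) {m n : ℕ} (h : m ≤ n) : seg X m ⊆ seg X n :=
  Finset.image_subset_image (Finset.range_subset_range.2 h)

open Classical in
lemma mem_seg_s12 (hX : X.Infinite) {n y : ℕ} :
    y ∈ seg X n ↔ y ∈ X ∧ Nat.count (· ∈ X) y < n := by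
  constructor
  · intro hy
    obtain ⟨i, hi, rfl⟩ := Finset.mem_image.1 hy
    exact ⟨Nat.nth_mem_of_infinite hX i,
      (Nat.count_nth_of_infinite (p := (· ∈ X)) hX i).trans_lt (Finset.mem_range.1 hi)⟩
  · rintro ⟨hyX, hy⟩
    exact Finset.mem_image.2 ⟨_, Finset.mem_range.2 hy, Nat.nth_count (p := (· ∈ X)) hyX⟩

lemma coe_seg_subset (hX : X.Infinite) (n : ℕ) : ↑(seg X n) ⊆ X :=
  fun _ hy ↦ ((mem_seg_s12 hX).1 hy).1

lemma IsInitialIn.seg_card_eq {s : Finset ℕ} (hX : X.Infinite) (hs : IsInitialIn s X) :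
    seg X s.card = s := by
  classical
  refine Finset.eq_of_subset_of_card_le (fun y hy ↦ ?_) (card_seg_s12 hX _).ge
  by_contra hys
  obtain ⟨hyX, hcount⟩ := (mem_seg_s12 hX).1 hy
  have hsub : s ⊆ (Finset.range y).filter (· ∈ X) := fun x hx ↦
    Finset.mem_filter.2 ⟨Finset.mem_range.2 (hs.2 x hx y hyX hys), hs.1 hx⟩
  have := Finset.card_le_card hsub
  rw [← Nat.count_eq_card_filter_range (· ∈ X)] at this
  omega

end seg

lemma PInitSeg.trans {s t u : Finset ℕ} (hst : PInitSeg s t) (htu : PInitSeg t u) :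
    PInitSeg s u := by
  refine ⟨hst.1.trans htu.1, hst.2.1.trans htu.2.1, fun x hx y hy hys ↦ ?_⟩
  by_cases hyt : y ∈ t
  · exact hst.2.2 x hx y hyt hys
  · exact htu.2.2 x (hst.1 hx) y hy hyt

instance : IsTrans (Finset ℕ) PInitSeg := ⟨fun _ _ _ ↦ PInitSeg.trans⟩

section chain

variable {S : ℕ → Finset ℕ} (hS : ∀ k, PInitSeg (S k) (S (k + 1)))
include hS

lemma monotone_of_chain : Monotone S :=
  monotone_nat_of_le_succ fun k ↦ (hS k).1

lemma isInitialIn_iUnion_of_chain (k : ℕ) : IsInitialIn (S k) (⋃ l, ↑(S l)) := by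
  refine ⟨Set.subset_iUnion (fun l ↦ (S l : Set ℕ)) k, fun x hx y hy hyk ↦ ?_⟩
  obtain ⟨l, hyl⟩ := Set.mem_iUnion.1 hy
  rcases lt_or_ge k l with hkl | hlk
  · exact (Nat.rel_of_forall_rel_succ_of_lt PInitSeg hS hkl).2.2 x hx y hyl hyk
  · exact absurd (monotone_of_chain hS hlk hyl) hyk

lemma strictMono_card_of_chain : StrictMono fun k ↦ (S k).card :=
  strictMono_nat_of_lt_succ fun k ↦ (hS k).2.1

lemma infinite_iUnion_of_chain : (⋃ l, (S l : Set ℕ)).Infinite := by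
  intro hfin
  set k := (⋃ l, (S l : Set ℕ)).ncard + 1
  have hle : (S k).card ≤ (⋃ l, (S l : Set ℕ)).ncard := by
    rw [← Set.ncard_coe_finset]
    exact Set.ncard_le_ncard (Set.subset_iUnion (fun l ↦ (S l : Set ℕ)) k) hfin
  have : k ≤ (S k).card := (strictMono_card_of_chain hS).le_apply
  omega

end chain

lemma EvConst.exists_stable {Q : Type*} {f : Finset ℕ → Q} (hf : EvConst f) :
    ∃ s, ∀ t, PInitSeg s t → f t = f s := by
  by_contra! hno
  choose g hg hfg using hno
  set S : ℕ → Finset ℕ := fun k ↦ g^[k] ∅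
  have hS : ∀ k, PInitSeg (S k) (S (k + 1)) := fun k ↦ by
    simp only [S, Function.iterate_succ_apply']
    exact hg _
  set X := ⋃ l, (S l : Set ℕ)
  have hX := infinite_iUnion_of_chain hS
  have hseg k : seg X (S k).card = S k := (isInitialIn_iUnion_of_chain hS k).seg_card_eq hX
  obtain ⟨N, hN⟩ := hf X hX
  have hmono := strictMono_card_of_chain hS
  have hN1 : N < (S (N + 1)).card := hmono.le_apply
  have h₁ := hN _ hN1
  have h₂ := hN _ (hN1.trans (hmono (Nat.lt_succ_self _)))
  rw [hseg] at h₁ h₂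
  exact hfg (S (N + 1)) (by simpa only [S, Function.iterate_succ_apply'] using h₂.trans h₁.symm)

lemma IsLimit.apply_union_eq {Q : Type*} {f : Finset ℕ → Q} {fbar : Set ℕ → Q}
    (hlim : IsLimit f fbar) {s : Finset ℕ} (hs : ∀ t, PInitSeg s t → f t = f s) {Y : Set ℕ}
    (hY : Y.Infinite) (hsY : ∀ x ∈ s, ∀ y ∈ Y, x < y) : fbar (↑s ∪ Y) = f s := by
  set V : Set ℕ := ↑s ∪ Y
  have hV : V.Infinite := hY.mono Set.subset_union_right
  have hsV : IsInitialIn s V := by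
    refine ⟨Set.subset_union_left, ?_⟩
    rintro x hx y (hy | hy) hys
    exacts [absurd hy hys, hsY x hx y hy]
  obtain ⟨N, hN⟩ := hlim V hV
  set n := max N (s.card + 1)
  have hext : PInitSeg s (seg V n) := by
    refine ⟨?_, by rw [card_seg_s12 hV]; omega,
      fun x hx y hy ↦ hsV.2 x hx y (coe_seg_subset hV n hy)⟩
    rw [← hsV.seg_card_eq hV]
    exact seg_mono V (by omega)
  rw [← hN n (le_max_left _ _), hs _ hext]

lemma dropMin_infinite {X : Set ℕ} (hX : X.Infinite) : (dropMin X).Infinite :=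
  hX.sdiff (Set.finite_singleton _)

lemma dropIter_succ (i : ℕ) (X : Set ℕ) : dropIter (i + 1) X = dropIter i (dropMin X) :=
  Function.iterate_succ_apply _ _ _

lemma dropMin_insert {a : ℕ} {Y : Set ℕ} (ha : ∀ y ∈ Y, a < y) : dropMin (insert a Y) = Y := by
  have hmin : sInf (insert a Y) = a :=
    IsLeast.csInf_eq ⟨Set.mem_insert a Y,
      Set.forall_mem_insert.2 ⟨le_rfl, fun y hy ↦ (ha y hy).le⟩⟩
  rw [dropMin, hmin, Set.insert_sdiff_self_of_notMem fun haY ↦ lt_irrefl a (ha a haY)]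

lemma dropIter_card_union (s : Finset ℕ) {Y : Set ℕ} (hsY : ∀ x ∈ s, ∀ y ∈ Y, x < y) :
    dropIter s.card (↑s ∪ Y) = Y := by
  classical
  induction s using Finset.induction_on_min with
  | empty => simp [dropIter]
  | insert a s has ih =>
    have ha : a ∉ s := fun h ↦ lt_irrefl a (has a h)
    have hbelow : ∀ y ∈ (↑s ∪ Y : Set ℕ), a < y := by
      rintro y (hy | hy)
      exacts [has y hy, hsY a (Finset.mem_insert_self a s) y hy]
    rw [Finset.card_insert_of_notMem ha, dropIter_succ, Finset.coe_insert, Set.insert_union,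
      dropMin_insert hbelow]
    exact ih fun x hx ↦ hsY x (Finset.mem_insert_of_mem hx)

lemma apply_dropIter_eq_iterate {Q : Type*} {g : Set ℕ → Q} {σ : Q → Q}
    (hσ : ∀ X : Set ℕ, X.Infinite → g (dropMin X) = σ (g X)) (i : ℕ) {X : Set ℕ}
    (hX : X.Infinite) : g (dropIter i X) = σ^[i] (g X) := by
  induction i generalizing X with
  | zero => rfl
  | succ i ih =>
    rw [dropIter_succ, ih (dropMin_infinite hX), hσ X hX, Function.iterate_succ_apply]

lemma after_univ_infinite (s : Finset ℕ) : (after Set.univ s).Infinite :=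
  (Set.Ioi_infinite (s.sup id)).mono fun _ hn ↦
    ⟨trivial, fun _ hm ↦ (Finset.le_sup (f := id) hm).trans_lt hn⟩

lemma Fin.eq_rev_of_ne {a b : Fin 2} (h : a ≠ b) : b = a.rev := by
  revert a b; decide

theorem stmt12 :
    ¬ ∃ (f : Finset ℕ → Fin 2) (fbar : Set ℕ → Fin 2),
      EvConst f ∧ IsLimit f fbar ∧
      ∀ X : Set ℕ, X.Infinite → fbar X ≠ fbar (dropMin X) := by
  rintro ⟨f, fbar, hf, hlim, halt⟩
  obtain ⟨s, hs⟩ := hf.exists_stable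
  set Z := after Set.univ s
  have hZ : Z.Infinite := after_univ_infinite s
  have hσ X (hX : X.Infinite) : fbar (dropMin X) = (fbar X).rev := Fin.eq_rev_of_ne (halt X hX)
  have hvalue (Y : Set ℕ) (hY : Y.Infinite) (hYZ : Y ⊆ Z) : fbar Y = Fin.rev^[s.card] (f s) := by
    have hsY : ∀ x ∈ s, ∀ y ∈ Y, x < y := fun x hx y hy ↦ (hYZ hy).2 x hx
    rw [← dropIter_card_union s hsY,
      apply_dropIter_eq_iterate hσ _ (hY.mono Set.subset_union_right),
      hlim.apply_union_eq hs hY hsY]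
  exact halt Z hZ ((hvalue Z hZ subset_rfl).trans
    (hvalue _ (dropMin_infinite hZ) Set.sdiff_subset).symm)
end
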